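/- arXiv:1107.5651 — 7 statements merged into one kernel-verified Lean document; each statement's English description precedes it below -/
import Mathlib

section
/- Let 0 < ε < a < 4 be reals and let F, G be nonempty finite families with densities p(F), p(G) ∈ (0,1], and let F₁, F₀, G₁, G₀, G₀∪G₁, G₀∩G₁ satisfy p(F₁)+p(F₀)=2p(F), p(G₀∪G₁)+p(G₀∩G₁)=2p(G). Suppose p(F₁)·p(G₁) ≤ a·p(F)·p(G), p(G₀∪G₁)·p(F₀) ≤ a·p(F)·p(G), p(G₀∩G₁)·p(F₁) ≤ ε·p(F)·p(G), and p(F₁) ≤ √a·p(F) with √a < 2. If 2 - a/(2-√a) ≥ √ε, then p(F₁) ≤ √ε·p(F). -/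
/-!
Since `p(F₁) ≤ √a·p(F)`, the complement part `F₀` has density at least `(2 - √a)·p(F)`, so the
bound on `p(G₀ ∪ G₁)·p(F₀)` forces `p(G₀ ∪ G₁) ≤ a/(2 - √a)·p(G)`. Hence
`p(G₀ ∩ G₁) ≥ (2 - a/(2 - √a))·p(G) ≥ √ε·p(G)`, and the bound `p(G₀ ∩ G₁)·p(F₁) ≤ ε·p(F)·p(G)`
then gives `p(F₁) ≤ √ε·p(F)`.
-/

lemma mul_le_of_mul_le_mul_of_mul_le {x y b c q : ℝ} (hx : 0 ≤ x) (hq : 0 < q)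
    (hy : c * q ≤ y) (h : x * y ≤ b * q) : x * c ≤ b :=
  le_of_mul_le_mul_right
    (calc x * c * q = x * (c * q) := mul_assoc x c q
      _ ≤ x * y := mul_le_mul_of_nonneg_left hy hx
      _ ≤ b * q := h) hq

theorem stmt_1_general (ε a pF pG pF1 pF0 pGu pGi : ℝ)
    (hε : 0 < ε)
    (hpF : 0 < pF) (hpG : 0 < pG)
    (hF1 : 0 ≤ pF1) (hGu : 0 ≤ pGu)
    (hFsum : pF1 + pF0 = 2 * pF)
    (hGsum : pGu + pGi = 2 * pG)
    (h2 : pGu * pF0 ≤ a * pF * pG)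
    (h3 : pGi * pF1 ≤ ε * pF * pG)
    (h4 : pF1 ≤ Real.sqrt a * pF)
    (h5 : Real.sqrt a < 2)
    (h6 : 2 - a / (2 - Real.sqrt a) ≥ Real.sqrt ε) :
    pF1 ≤ Real.sqrt ε * pF := by
  have hs : 0 < 2 - Real.sqrt a := by linarith
  have ht : 0 < Real.sqrt ε := Real.sqrt_pos.mpr hε
  have hF0_ge : (2 - Real.sqrt a) * pF ≤ pF0 := by linarith
  have hGu_le : pGu ≤ a / (2 - Real.sqrt a) * pG := by
    rw [div_mul_eq_mul_div, le_div_iff₀ hs]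
    exact mul_le_of_mul_le_mul_of_mul_le hGu hpF hF0_ge (by linarith)
  have hGi_ge : Real.sqrt ε * pG ≤ pGi :=
    calc Real.sqrt ε * pG ≤ (2 - a / (2 - Real.sqrt a)) * pG :=
          mul_le_mul_of_nonneg_right h6 hpG.le
      _ ≤ pGi := by linarith
  have hF1_mul : pF1 * Real.sqrt ε ≤ Real.sqrt ε * Real.sqrt ε * pF :=
    mul_le_of_mul_le_mul_of_mul_le hF1 hpG hGi_ge
      (by rw [Real.mul_self_sqrt hε.le]; linarith)
  exact le_of_mul_le_mul_right (hF1_mul.trans_eq (by ring)) ht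

/-- The Claim in the proof of Theorem 2 of Mubayi–Rödl, "Specified Intersections". -/
theorem stmt_1 (ε a pF pG pF1 pF0 pG1 pGu pGi : ℝ)
    (hε : 0 < ε) (hεa : ε < a) (ha4 : a < 4)
    (hpF : 0 < pF) (hpF1' : pF ≤ 1) (hpG : 0 < pG) (hpG1' : pG ≤ 1)
    (hF1 : 0 ≤ pF1) (hF0 : 0 < pF0) (hG1 : 0 ≤ pG1) (hGu : 0 ≤ pGu) (hGi : 0 ≤ pGi)
    (hFsum : pF1 + pF0 = 2 * pF)
    (hGsum : pGu + pGi = 2 * pG)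
    (h1 : pF1 * pG1 ≤ a * pF * pG)
    (h2 : pGu * pF0 ≤ a * pF * pG)
    (h3 : pGi * pF1 ≤ ε * pF * pG)
    (h4 : pF1 ≤ Real.sqrt a * pF)
    (h5 : Real.sqrt a < 2)
    (h6 : 2 - a / (2 - Real.sqrt a) ≥ Real.sqrt ε) :
    pF1 ≤ Real.sqrt ε * pF :=
  stmt_1_general ε a pF pG pF1 pF0 pGu pGi hε hpF hpG hF1 hGu hFsum hGsum h2 h3 h4 h5 h6
end

section
/- Let V be a finite set, W ⊆ V with |W| = x, and let F be a family of subsets of V such that Σ_{S ∈ F} |S ∩ W| < s·|F| for a positive integer s. Then |F| ≤ (s+1)·(Σ_{i=0}^{s} C(x,i))·2^{|V|-x}. -/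
open Finset

/-- The counting Claim in Section 2.1 of Mubayi–Rödl, "Specified Intersections". -/
theorem stmt_3 {α : Type*} [DecidableEq α] (V W : Finset α) (hWV : W ⊆ V)
    (F : Finset (Finset α)) (hF : ∀ S ∈ F, S ⊆ V)
    (x : ℕ) (hx : x = W.card) (s : ℕ) (hs : 0 < s)
    (hsum : ∑ S ∈ F, (S ∩ W).card < s * F.card) :
    F.card ≤ (s + 1) * (∑ i ∈ Finset.range (s + 1), x.choose i) * 2 ^ (V.card - x) := by
  classical
  set G := F.filter (fun S => (S ∩ W).card ≤ s) with hG
  set B := F.filter (fun S => ¬ (S ∩ W).card ≤ s) with hB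
  have hsplit : G.card + B.card = F.card :=
    Finset.card_filter_add_card_filter_not _
  have hBsum : (s + 1) * B.card ≤ ∑ S ∈ F, (S ∩ W).card := by
    calc (s + 1) * B.card = ∑ _S ∈ B, (s + 1) := by
          rw [Finset.sum_const, smul_eq_mul, mul_comm]
      _ ≤ ∑ S ∈ B, (S ∩ W).card := Finset.sum_le_sum (fun S hS => by
          have := (Finset.mem_filter.mp hS).2; omega)
      _ ≤ ∑ S ∈ F, (S ∩ W).card :=
          Finset.sum_le_sum_of_subset (Finset.filter_subset _ _)
  have hFG : F.card ≤ (s + 1) * G.card := by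
    nlinarith [hsplit, hBsum, hsum]
  -- bound G.card
  have hGsub : ∀ S ∈ G, ((S ∩ W, S \ W) : Finset α × Finset α) ∈
      (W.powerset.filter fun A => A.card ≤ s) ×ˢ (V \ W).powerset := by
    intro S hS
    rw [Finset.mem_product, Finset.mem_filter, Finset.mem_powerset, Finset.mem_powerset]
    refine ⟨⟨Finset.inter_subset_right, (Finset.mem_filter.mp hS).2⟩, ?_⟩
    exact Finset.sdiff_subset_sdiff (hF S (Finset.mem_filter.mp hS).1) le_rfl
  have hinj : Set.InjOn (fun S : Finset α => (S ∩ W, S \ W)) G := by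
    intro S hS T hT h
    have h1 : S ∩ W = T ∩ W := congrArg Prod.fst h
    have h2 : S \ W = T \ W := congrArg Prod.snd h
    have : (S \ W) ∪ (S ∩ W) = (T \ W) ∪ (T ∩ W) := by rw [h1, h2]
    simpa [Finset.sdiff_union_inter] using this
  have hGcard : G.card ≤ (W.powerset.filter fun A => A.card ≤ s).card * (V \ W).powerset.card := by
    have := Finset.card_le_card_of_injOn _ hGsub hinj
    simpa [Finset.card_product] using this
  have hfilter : (W.powerset.filter fun A => A.card ≤ s) =
      (Finset.range (s + 1)).biUnion (fun i => W.powersetCard i) := by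
    ext A
    simp only [Finset.mem_filter, Finset.mem_powerset, Finset.mem_biUnion, Finset.mem_range,
      Finset.mem_powersetCard]
    constructor
    · rintro ⟨hA, hc⟩; exact ⟨A.card, by omega, hA, rfl⟩
    · rintro ⟨i, hi, hA, rfl⟩; exact ⟨hA, by omega⟩
  have hfc : (W.powerset.filter fun A => A.card ≤ s).card =
      ∑ i ∈ Finset.range (s + 1), x.choose i := by
    rw [hfilter, Finset.card_biUnion]
    · exact Finset.sum_congr rfl fun i _ => by rw [Finset.card_powersetCard, hx]
    · intro i _ j _ hij
      refine Finset.disjoint_left.mpr fun A hA hA' => hij ?_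
      rw [Finset.mem_powersetCard] at hA hA'
      omega
  have hpc : (V \ W).powerset.card = 2 ^ (V.card - x) := by
    rw [Finset.card_powerset, Finset.card_sdiff_of_subset hWV, hx]
  calc F.card ≤ (s + 1) * G.card := hFG
    _ ≤ (s + 1) * ((∑ i ∈ Finset.range (s + 1), x.choose i) * 2 ^ (V.card - x)) := by
        apply Nat.mul_le_mul_left
        rw [← hfc, ← hpc]; exact hGcard
    _ = (s + 1) * (∑ i ∈ Finset.range (s + 1), x.choose i) * 2 ^ (V.card - x) := by ring
end

section
/- Let W, M be finite sets of integers with every maximal run of consecutive integers in W having length at most l, and |M| ≤ |W|. Then |W ∩ M| + |W ∩ (M-1)| ≤ (2 - 1/l)·|W|. -/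
open Finset

/-- If every maximal run of consecutive integers in `W` has length at most `l` and
`|M| ≤ |W|`, then `|W ∩ M| + |W ∩ (M-1)| ≤ (2 - 1/l)·|W|`. -/
theorem stmt_8 (l : ℕ) (hl : 1 ≤ l) (W M : Finset ℤ)
    (hrun : ∀ a : ℤ, ∃ k : ℕ, k ≤ l ∧ a + (k : ℤ) ∉ W)
    (hM : M.card ≤ W.card) :
    ((W ∩ M).card : ℝ) + ((W ∩ M.image (· - 1)).card : ℝ) ≤ (2 - 1 / (l : ℝ)) * W.card := by
  classical
  have hex : ∀ w : ℤ, ∃ k : ℕ, w - (k : ℤ) ∉ W := by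
    intro w
    obtain ⟨k, hk, hnk⟩ := hrun (w - (l : ℤ))
    refine ⟨l - k, ?_⟩
    have : ((l - k : ℕ) : ℤ) = (l : ℤ) - k := by
      push_cast [Nat.cast_sub hk]; ring
    rw [this]
    convert hnk using 2
    ring
  set n : ℤ → ℕ := fun w => Nat.find (hex w) with hn
  have hn0 : ∀ w : ℤ, w - (n w : ℤ) ∉ W := fun w => Nat.find_spec (hex w)
  have hlt : ∀ w : ℤ, ∀ j : ℕ, j < n w → w - (j : ℤ) ∈ W := by
    intro w j hj
    by_contra h
    exact absurd (Nat.find_min (hex w) hj) (by simpa using h)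
  have hn1 : ∀ w ∈ W, 1 ≤ n w := by
    intro w hw
    by_contra h
    have h0 : n w = 0 := by omega
    have h1 := hn0 w
    rw [h0] at h1
    simp at h1
    exact h1 hw
  have hnl : ∀ w ∈ W, n w ≤ l := by
    intro w hw
    by_contra hc
    push_neg at hc
    obtain ⟨k, hk, hnk⟩ := hrun (w - (n w : ℤ) + 1)
    have hjlt : n w - 1 - k < n w := by omega
    have := hlt w (n w - 1 - k) hjlt
    have hcast : ((n w - 1 - k : ℕ) : ℤ) = (n w : ℤ) - 1 - k := by
      have : k + 1 ≤ n w := by omega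
      push_cast [Nat.cast_sub (by omega : 1 + k ≤ n w)]
      omega
    apply hnk
    convert this using 1
    rw [hcast]; ring
  set f : ℤ → ℤ := fun w => w - (n w : ℤ) with hf
  set T : Finset ℤ := W.image f with hT
  -- Step 1: W.card ≤ l * T.card
  have h1 : W.card ≤ l * T.card := by
    apply Finset.card_le_mul_card_image_of_maps_to (fun a ha => Finset.mem_image_of_mem f ha)
    intro b hb
    have hsub : (W.filter fun x => f x = b) ⊆ Finset.Icc (b + 1) (b + l) := by
      intro w hw
      rw [Finset.mem_filter] at hw
      obtain ⟨hwW, hwf⟩ := hw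
      have h1 := hn1 w hwW
      have h2 := hnl w hwW
      rw [Finset.mem_Icc]
      have : w = b + (n w : ℤ) := by rw [← hwf]; simp [hf]
      omega
    calc (W.filter fun x => f x = b).card ≤ (Finset.Icc (b + 1) (b + l)).card :=
          Finset.card_le_card hsub
      _ = l := by rw [Int.card_Icc]; simp
  -- Step 2: T.card + (W ∩ W.image (· + 1)).card ≤ W.card
  have h2 : T.card + (W ∩ W.image (· + 1)).card ≤ W.card := by
    have hmap : ∀ b ∈ T, b + 1 ∈ W \ W.image (· + 1) := by
      intro b hb
      rw [hT, Finset.mem_image] at hb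
      obtain ⟨w, hwW, hwb⟩ := hb
      have hwb' : w - (n w : ℤ) = b := hwb
      rw [Finset.mem_sdiff]
      constructor
      · have hn1' := hn1 w hwW
        have hmem := hlt w (n w - 1) (by omega)
        have hcast : ((n w - 1 : ℕ) : ℤ) = (n w : ℤ) - 1 := by
          push_cast [Nat.cast_sub hn1']; ring
        rw [hcast] at hmem
        have heq : b + 1 = w - ((n w : ℤ) - 1) := by omega
        rw [heq]
        exact hmem
      · rw [Finset.mem_image]
        rintro ⟨x, hxW, hx⟩
        have hxb : x = b := by omega
        subst hxb
        rw [← hwb'] at hxW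
        exact hn0 w hxW
    have hcard1 : T.card ≤ (W \ W.image (· + 1)).card :=
      Finset.card_le_card_of_injOn _ hmap (by intro a _ b _ h; simp only at h; omega)
    have hcard2 : (W ∩ W.image (· + 1)).card + (W \ W.image (· + 1)).card = W.card :=
      Finset.card_inter_add_card_sdiff W (W.image (· + 1))
    omega
  -- Step 3: (W ∩ M.image (· - 1)).card = ((W.image (· + 1)) ∩ M).card
  have h3 : (W ∩ M.image (· - 1)).card = ((W.image (· + 1)) ∩ M).card := by
    apply Finset.card_bij (fun w _ => w + 1)
    · intro w hw
      rw [Finset.mem_inter, Finset.mem_image] at hw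
      obtain ⟨hwW, m, hmM, hm⟩ := hw
      rw [Finset.mem_inter, Finset.mem_image]
      exact ⟨⟨w, hwW, rfl⟩, by simpa [show w + 1 = m by omega] using hmM⟩
    · intro a _ b _ h; omega
    · intro b hb
      rw [Finset.mem_inter, Finset.mem_image] at hb
      obtain ⟨⟨w, hwW, hw⟩, hbM⟩ := hb
      refine ⟨w, ?_, by omega⟩
      rw [Finset.mem_inter, Finset.mem_image]
      exact ⟨hwW, b, hbM, by omega⟩
  -- Step 4: (W ∩ M).card + ((W.image (·+1)) ∩ M).card ≤ (W ∩ W.image (·+1)).card + M.card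
  have h4 : (W ∩ M).card + ((W.image (· + 1)) ∩ M).card ≤
      (W ∩ W.image (· + 1)).card + M.card := by
    have hid := Finset.card_union_add_card_inter (W ∩ M) ((W.image (· + 1)) ∩ M)
    have hu : (W ∩ M) ∪ ((W.image (· + 1)) ∩ M) ⊆ M := by
      intro x hx
      rw [Finset.mem_union, Finset.mem_inter, Finset.mem_inter] at hx
      rcases hx with h | h <;> exact h.2
    have hi : (W ∩ M) ∩ ((W.image (· + 1)) ∩ M) ⊆ W ∩ W.image (· + 1) := by
      intro x hx
      simp only [Finset.mem_inter] at hx ⊢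
      exact ⟨hx.1.1, hx.2.1⟩
    have hcu := Finset.card_le_card hu
    have hci := Finset.card_le_card hi
    omega
  -- Combine in ℝ
  have hlR : (0 : ℝ) < l := by exact_mod_cast hl
  set C := (W ∩ W.image (· + 1)).card with hC
  have hnat : W.card + l * C ≤ l * W.card := by
    have h2' : l * T.card + l * C ≤ l * W.card := by
      calc l * T.card + l * C = l * (T.card + C) := by ring
        _ ≤ l * W.card := Nat.mul_le_mul_left l h2
    exact le_trans (Nat.add_le_add_right h1 (l * C)) h2'
  have hcast : (W.card : ℝ) + (l : ℝ) * C ≤ (l : ℝ) * W.card := by exact_mod_cast hnat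
  have hCR : (C : ℝ) ≤ (W.card : ℝ) - (W.card : ℝ) / l := by
    have hd : (W.card : ℝ) / l * l = W.card := div_mul_cancel₀ _ (ne_of_gt hlR)
    nlinarith [hcast, hlR, hd]
  have hAB : ((W ∩ M).card : ℝ) + ((W ∩ M.image (· - 1)).card : ℝ) ≤ (C : ℝ) + W.card := by
    rw [h3]
    have : (W ∩ M).card + ((W.image (· + 1)) ∩ M).card ≤ C + W.card := by omega
    exact_mod_cast this
  have : (2 - 1 / (l : ℝ)) * W.card = 2 * W.card - W.card / l := by ring
  rw [this]
  linarith
end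

section
/- Define h : (finite subsets of ℕ) → ℕ ∪ {∞} recursively by h(∅) = 0 and, for L ≠ ∅, h(L) = 1 + max over M ∈ S(L) of min{h(L ∩ M), h(L ∩ (M-1))}, where S(L) = {M ⊆ ℕ finite : M ≠ L, 0 < |M| ≤ |L|}. Then h is monotone: if L' ⊆ L then h(L') ≤ h(L). -/
open Finset

/-- `M - 1 = {m-1 : m ∈ M, m ≥ 1}`. -/
def shiftDown (M : Finset ℕ) : Finset ℕ := (M.filter (1 ≤ ·)).image (· - 1)

/-- `h` satisfies the recursion defining the height function of Mubayi–Rödl: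
`h(∅) = 0` and, for `L ≠ ∅`,
`h(L) = 1 + max_{M ∈ S(L)} min {h(L ∩ M), h(L ∩ (M-1))}` where
`S(L) = {M ⊆ ℕ finite : M ≠ L, 0 < |M| ≤ |L|}`. -/
def IsHeightRec (h : Finset ℕ → ℕ) : Prop :=
  h ∅ = 0 ∧ ∀ L : Finset ℕ, L ≠ ∅ →
    h L = 1 + sSup {k : ℕ | ∃ M : Finset ℕ, M ≠ L ∧ 0 < M.card ∧ M.card ≤ L.card ∧
      k = min (h (L ∩ M)) (h (L ∩ shiftDown M))}

/-! Strong induction on `L`. For `L' ⊊ L`, every `M` admissible for `L'` is admissible for `L`,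
since `|M| ≤ |L'| < |L|` forces `M ≠ L`; and both `L ∩ M` and `L ∩ (M - 1)` are proper subsets
of `L`, being of size at most `|M| < |L|`, so the induction hypothesis compares each term of the
minimum for `L'` with the corresponding one for `L`. -/

/-- For `L ≠ ∅`, `IsHeightRec h` reads `h L = 1 + sSup (heightChoices h L)` definitionally. -/
def heightChoices (h : Finset ℕ → ℕ) (L : Finset ℕ) : Set ℕ :=
  {k : ℕ | ∃ M : Finset ℕ, M ≠ L ∧ 0 < M.card ∧ M.card ≤ L.card ∧
    k = min (h (L ∩ M)) (h (L ∩ shiftDown M))}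

lemma card_shiftDown_le (M : Finset ℕ) : (shiftDown M).card ≤ M.card :=
  card_image_le.trans (card_filter_le _ _)

lemma inter_ssubset_of_card_lt {L M : Finset ℕ} (hM : M.card < L.card) : L ∩ M ⊂ L :=
  inter_subset_left.ssubset_of_ne fun e ↦
    (card_le_card (e ▸ inter_subset_right : L ⊆ M)).not_gt hM

lemma bddAbove_heightChoices (h : Finset ℕ → ℕ) (L : Finset ℕ) :
    BddAbove (heightChoices h L) := by
  refine ⟨L.powerset.sup h, ?_⟩
  rintro k ⟨M, -, -, -, rfl⟩
  exact (min_le_left _ _).trans (le_sup (mem_powerset.mpr inter_subset_left))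

lemma sSup_heightChoices_le {h : Finset ℕ → ℕ} {L L' : Finset ℕ} (hsub : L' ⊆ L)
    (hcard : L'.card < L.card) (ih : ∀ N ⊂ L, ∀ N' ⊆ N, h N' ≤ h N) :
    sSup (heightChoices h L') ≤ sSup (heightChoices h L) := by
  refine csSup_le' ?_
  rintro k ⟨M, -, hM_pos, hM_card, rfl⟩
  have hML : M.card < L.card := hM_card.trans_lt hcard
  have hM : h (L' ∩ M) ≤ h (L ∩ M) :=
    ih _ (inter_ssubset_of_card_lt hML) _ (inter_subset_inter_right hsub)
  have hM₁ : h (L' ∩ shiftDown M) ≤ h (L ∩ shiftDown M) :=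
    ih _ (inter_ssubset_of_card_lt ((card_shiftDown_le M).trans_lt hML)) _
      (inter_subset_inter_right hsub)
  have hM_adm : min (h (L ∩ M)) (h (L ∩ shiftDown M)) ∈ heightChoices h L :=
    ⟨M, fun e ↦ (e ▸ hML).false, hM_pos, hML.le, rfl⟩
  exact (min_le_min hM hM₁).trans (le_csSup (bddAbove_heightChoices h L) hM_adm)

/-- The height function is monotone (property (A2)). -/
theorem stmt_9 (h : Finset ℕ → ℕ) (hh : IsHeightRec h) (L L' : Finset ℕ)
    (hsub : L' ⊆ L) : h L' ≤ h L := by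
  obtain ⟨h_empty, h_rec⟩ := hh
  induction L using Finset.strongInduction generalizing L' with
  | _ L ih =>
    rcases eq_or_ne L' L with rfl | hne
    · exact le_rfl
    rcases eq_or_ne L' ∅ with rfl | hL'
    · simp [h_empty]
    have hssub : L' ⊂ L := hsub.ssubset_of_ne hne
    have hL : L ≠ ∅ := ((nonempty_of_ne_empty hL').mono hsub).ne_empty
    rw [h_rec L' hL', h_rec L hL]
    exact Nat.add_le_add_left (sSup_heightChoices_le hsub (card_lt_card hssub) ih) 1
end

section
/- With h the recursively defined height function of Mubayi–Rödl (h(∅)=0, h(L)=1+max_{M∈S(L)} min{h(L∩M), h(L∩(M-1))}), property (A4) holds: if h(L) ≤ s and h(L') ≤ s with s < ∞, then h(L' ∩ L) ≤ s-1 or h(L' ∩ (L-1)) ≤ s-1. -/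
open Finset

/-- `M + 1 = {m+1 : m ∈ M}`. -/
def shiftUp (M : Finset ℕ) : Finset ℕ := M.image (· + 1)

lemma mem_shiftDown' {M : Finset ℕ} {a : ℕ} : a ∈ shiftDown M ↔ a + 1 ∈ M := by
  simp only [shiftDown, mem_image, mem_filter]
  constructor
  · rintro ⟨m, ⟨hm, h1⟩, h2⟩
    have : m = a + 1 := by omega
    exact this ▸ hm
  · intro hx; exact ⟨a + 1, ⟨hx, by omega⟩, rfl⟩

lemma mem_shiftUp' {M : Finset ℕ} {a : ℕ} : a ∈ shiftUp M ↔ ∃ b ∈ M, b + 1 = a := by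
  simp [shiftUp]

lemma shiftUp_inter (A N : Finset ℕ) : shiftUp A ∩ N = shiftUp (A ∩ shiftDown N) := by
  ext x
  simp only [mem_inter, mem_shiftUp', mem_shiftDown']
  constructor
  · rintro ⟨⟨b, hb, rfl⟩, hN⟩; exact ⟨b, ⟨hb, hN⟩, rfl⟩
  · rintro ⟨b, ⟨hb, hN⟩, rfl⟩; exact ⟨⟨b, hb, rfl⟩, hN⟩

lemma shiftDown_shiftUp (M : Finset ℕ) : shiftDown (shiftUp M) = M := by
  ext a
  simp only [mem_shiftDown', mem_shiftUp']
  constructor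
  · rintro ⟨b, hb, hb2⟩
    have : b = a := by omega
    exact this ▸ hb
  · intro ha; exact ⟨a, ha, rfl⟩

lemma card_shiftUp (M : Finset ℕ) : (shiftUp M).card = M.card :=
  card_image_of_injective _ (fun a b hab => by omega)

lemma shiftUp_shiftDown_subset (M : Finset ℕ) : shiftUp (shiftDown M) ⊆ M := by
  intro x hx
  rw [mem_shiftUp'] at hx
  obtain ⟨b, hb, rfl⟩ := hx
  exact mem_shiftDown'.1 hb

lemma eq_shiftUp_of_shiftDown_eq {M A : Finset ℕ} (h : shiftDown M = A) (hc : M.card ≤ A.card) :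
    M = shiftUp A := by
  have h1 : shiftUp A ⊆ M := h ▸ shiftUp_shiftDown_subset M
  exact (eq_of_subset_of_card_le h1 (by rw [card_shiftUp]; exact hc)).symm

lemma not_subset_shiftUp {A : Finset ℕ} (hA : A.Nonempty) : ¬ A ⊆ shiftUp A := by
  intro hsub
  have h1 := hsub (A.min'_mem hA)
  rw [mem_shiftUp'] at h1
  obtain ⟨b, hb, hb2⟩ := h1
  have := A.min'_le b hb
  omega

lemma shiftUp_ne {A : Finset ℕ} (hA : A.Nonempty) : shiftUp A ≠ A := by
  intro e
  exact not_subset_shiftUp hA (by rw [e])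

lemma shiftUp_inj {A B : Finset ℕ} (e : shiftUp A = shiftUp B) : A = B := by
  have := congrArg shiftDown e
  rwa [shiftDown_shiftUp, shiftDown_shiftUp] at this

lemma shiftUp_nonempty {A : Finset ℕ} (hA : A.Nonempty) : (shiftUp A).Nonempty :=
  hA.image _

lemma bddS (h : Finset ℕ → ℕ) (X : Finset ℕ) :
    BddAbove {k : ℕ | ∃ M : Finset ℕ, M ≠ X ∧ 0 < M.card ∧ M.card ≤ X.card ∧
      k = min (h (X ∩ M)) (h (X ∩ shiftDown M))} := by
  refine ⟨X.powerset.sup h, ?_⟩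
  rintro k ⟨M, _, _, _, rfl⟩
  exact le_trans (min_le_left _ _) (Finset.le_sup (mem_powerset.2 inter_subset_left))

lemma step {h : Finset ℕ → ℕ} (hh : IsHeightRec h) {X M : Finset ℕ} (hX : X ≠ ∅) (hM : M ≠ X)
    (h1 : 0 < M.card) (h2 : M.card ≤ X.card) :
    min (h (X ∩ M)) (h (X ∩ shiftDown M)) ≤ h X - 1 := by
  have hr := hh.2 X hX
  have hmem : min (h (X ∩ M)) (h (X ∩ shiftDown M)) ∈
      {k : ℕ | ∃ M : Finset ℕ, M ≠ X ∧ 0 < M.card ∧ M.card ≤ X.card ∧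
        k = min (h (X ∩ M)) (h (X ∩ shiftDown M))} := ⟨M, hM, h1, h2, rfl⟩
  have := le_csSup (bddS h X) hmem
  omega

lemma shift_inv {h : Finset ℕ → ℕ} (hh : IsHeightRec h) :
    ∀ A : Finset ℕ, h (shiftUp A) = h A := by
  intro A
  induction A using Finset.strongInduction with
  | _ A ih =>
  rcases eq_or_ne A ∅ with rfl | hA
  · have : shiftUp (∅ : Finset ℕ) = ∅ := by simp [shiftUp]
    rw [this]
  have hAne : A.Nonempty := nonempty_iff_ne_empty.2 hA
  have hA'ne : (shiftUp A).Nonempty := shiftUp_nonempty hAne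
  have hA' : shiftUp A ≠ ∅ := nonempty_iff_ne_empty.1 hA'ne
  have hcardA' : (shiftUp A).card = A.card := card_shiftUp A
  set A' := shiftUp A with hA'def
  set S1 := {k : ℕ | ∃ M : Finset ℕ, M ≠ A ∧ 0 < M.card ∧ M.card ≤ A.card ∧
      k = min (h (A ∩ M)) (h (A ∩ shiftDown M))} with hS1
  set S2 := {k : ℕ | ∃ M : Finset ℕ, M ≠ A' ∧ 0 < M.card ∧ M.card ≤ A'.card ∧
      k = min (h (A' ∩ M)) (h (A' ∩ shiftDown M))} with hS2
  have e1 : h A = 1 + sSup S1 := hh.2 A hA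
  have e2 : h A' = 1 + sSup S2 := hh.2 A' hA'
  have hproper : A ∩ A' ≠ A := by
    intro e
    exact not_subset_shiftUp hAne (inter_eq_left.1 e)
  have hproper' : A ∩ A' ⊂ A := Finset.ssubset_iff_subset_ne.2 ⟨inter_subset_left, hproper⟩
  -- key: h (A ∩ A') ≤ sSup S1
  have hx1 : h (A ∩ A') ≤ sSup S1 := by
    have hmem : min (h (A ∩ A')) (h (A ∩ shiftDown A')) ∈ S1 :=
      ⟨A', shiftUp_ne hAne, by rw [hcardA']; exact card_pos.2 hAne, le_of_eq hcardA', rfl⟩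
    have hle := le_csSup (bddS h A) hmem
    rw [← hS1, hA'def, shiftDown_shiftUp, inter_self, ← hA'def] at hle
    rcases le_total (h (A ∩ A')) (h A) with hc | hc
    · rwa [min_eq_left hc] at hle
    · rw [min_eq_right hc] at hle; omega
  -- key: h (A ∩ A') ≤ sSup S2
  have hx2 : h (A ∩ A') ≤ sSup S2 := by
    have hmem : min (h (A' ∩ shiftUp A')) (h (A' ∩ shiftDown (shiftUp A'))) ∈ S2 :=
      ⟨shiftUp A', shiftUp_ne hA'ne, by rw [card_shiftUp]; exact card_pos.2 hA'ne,
        le_of_eq (card_shiftUp A'), rfl⟩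
    have hle := le_csSup (bddS h A') hmem
    rw [← hS2] at hle
    have key : A' ∩ shiftUp A' = shiftUp (A ∩ A') := by
      rw [hA'def, shiftUp_inter A (shiftUp (shiftUp A)), shiftDown_shiftUp]
    rw [key, shiftDown_shiftUp, inter_self, ih (A ∩ A') hproper'] at hle
    rcases le_total (h (A ∩ A')) (h A') with hc | hc
    · rwa [min_eq_left hc] at hle
    · rw [min_eq_right hc] at hle; omega
  have le12 : sSup S1 ≤ sSup S2 := by
    apply csSup_le'
    rintro k ⟨M, hMne, hM0, hMle, rfl⟩
    by_cases hcase : A ∩ shiftDown M = A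
    · have hsub : A ⊆ shiftDown M := inter_eq_left.1 hcase
      have heq : A = shiftDown M :=
        eq_of_subset_of_card_le hsub (le_trans (card_shiftDown_le M) hMle)
      have hM : M = A' := by
        have := eq_shiftUp_of_shiftDown_eq heq.symm hMle
        rwa [← hA'def] at this
      subst hM
      rw [hcase]
      exact le_trans (min_le_left _ _) hx2
    · have hAM : A ∩ M ≠ A := by
        intro e
        exact hMne (eq_of_subset_of_card_le (inter_eq_left.1 e) hMle).symm
      have ihm := ih (A ∩ M) (Finset.ssubset_iff_subset_ne.2 ⟨inter_subset_left, hAM⟩)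
      have ihd := ih (A ∩ shiftDown M)
        (Finset.ssubset_iff_subset_ne.2 ⟨inter_subset_left, hcase⟩)
      have hmem : min (h (A' ∩ shiftUp M)) (h (A' ∩ shiftDown (shiftUp M))) ∈ S2 :=
        ⟨shiftUp M, fun e => hMne (shiftUp_inj (by rw [hA'def] at e; exact e)),
          by rw [card_shiftUp]; exact hM0,
          by rw [card_shiftUp, hcardA']; exact hMle, rfl⟩
      have hle := le_csSup (bddS h A') hmem
      rw [← hS2] at hle
      have r1 : A' ∩ shiftUp M = shiftUp (A ∩ M) := by
        rw [hA'def, shiftUp_inter A (shiftUp M), shiftDown_shiftUp]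
      have r2 : A' ∩ shiftDown (shiftUp M) = shiftUp (A ∩ shiftDown M) := by
        rw [shiftDown_shiftUp, hA'def, shiftUp_inter A M]
      rw [r1, r2, ihm, ihd] at hle
      exact hle
  have le21 : sSup S2 ≤ sSup S1 := by
    apply csSup_le'
    rintro k ⟨M', hne, h0, hle', rfl⟩
    have hle'' : M'.card ≤ A.card := le_trans hle' (le_of_eq hcardA')
    have r1 : A' ∩ M' = shiftUp (A ∩ shiftDown M') := by rw [hA'def, shiftUp_inter]
    have r2 : A' ∩ shiftDown M' = shiftUp (A ∩ shiftDown (shiftDown M')) := by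
      rw [hA'def, shiftUp_inter]
    rcases eq_or_ne (shiftDown M') ∅ with hN0 | hN0
    · rw [r1, hN0]
      simp only [inter_empty]
      have he : shiftUp (∅ : Finset ℕ) = ∅ := by simp [shiftUp]
      rw [he, hh.1]
      exact le_trans (min_le_left _ _) (Nat.zero_le _)
    by_cases hcase1 : A ∩ shiftDown M' = A
    · exfalso
      have hsub : A ⊆ shiftDown M' := inter_eq_left.1 hcase1
      have heq : A = shiftDown M' :=
        eq_of_subset_of_card_le hsub (le_trans (card_shiftDown_le M') hle'')
      have hM : M' = shiftUp A := eq_shiftUp_of_shiftDown_eq heq.symm hle''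
      exact hne (by rw [hM, ← hA'def])
    by_cases hcase2 : A ∩ shiftDown (shiftDown M') = A
    · have hsub : A ⊆ shiftDown (shiftDown M') := inter_eq_left.1 hcase2
      have hcard : (shiftDown (shiftDown M')).card ≤ A.card :=
        le_trans (card_shiftDown_le _) (le_trans (card_shiftDown_le _) hle'')
      have heq : A = shiftDown (shiftDown M') := eq_of_subset_of_card_le hsub hcard
      have hN : shiftDown M' = shiftUp A :=
        eq_shiftUp_of_shiftDown_eq heq.symm (le_trans (card_shiftDown_le _) hle'')
      rw [r1, hN, ← hA'def, ih (A ∩ A') hproper']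
      exact le_trans (min_le_left _ _) hx1
    · have hNA : shiftDown M' ≠ A := fun e => hcase1 (by rw [e, inter_self])
      have hNcard : 0 < (shiftDown M').card := card_pos.2 (nonempty_iff_ne_empty.2 hN0)
      have ihm := ih (A ∩ shiftDown M')
        (Finset.ssubset_iff_subset_ne.2 ⟨inter_subset_left, hcase1⟩)
      have ihd := ih (A ∩ shiftDown (shiftDown M'))
        (Finset.ssubset_iff_subset_ne.2 ⟨inter_subset_left, hcase2⟩)
      rw [r1, r2, ihm, ihd]
      have hmem : min (h (A ∩ shiftDown M')) (h (A ∩ shiftDown (shiftDown M'))) ∈ S1 :=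
        ⟨shiftDown M', hNA, hNcard, le_trans (card_shiftDown_le _) hle'', rfl⟩
      have hle := le_csSup (bddS h A) hmem
      rwa [← hS1] at hle
  omega

/-- Property (A4) of the height function: if `h(L) ≤ s` and `h(L') ≤ s`, then
`h(L' ∩ L) ≤ s-1` or `h(L' ∩ (L-1)) ≤ s-1`. -/
theorem stmt_11 (h : Finset ℕ → ℕ) (hh : IsHeightRec h) (L L' : Finset ℕ) (s : ℕ)
    (hL : h L ≤ s) (hL' : h L' ≤ s) :
    h (L' ∩ L) ≤ s - 1 ∨ h (L' ∩ shiftDown L) ≤ s - 1 := by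
  rcases eq_or_ne L ∅ with rfl | hLne
  · left; rw [inter_empty, hh.1]; exact Nat.zero_le _
  rcases eq_or_ne L' ∅ with rfl | hL'ne
  · left; rw [empty_inter, hh.1]; exact Nat.zero_le _
  by_cases hcase : L.card ≤ L'.card ∧ L ≠ L'
  · have hs := step hh hL'ne hcase.2 (card_pos.2 (nonempty_iff_ne_empty.2 hLne)) hcase.1
    have hfin : min (h (L' ∩ L)) (h (L' ∩ shiftDown L)) ≤ s - 1 :=
      le_trans hs (Nat.sub_le_sub_right hL' 1)
    exact min_le_iff.1 hfin
  · push_neg at hcase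
    have hle : L'.card ≤ L.card := by
      rcases lt_or_ge L'.card L.card with hlt | hge
      · exact le_of_lt hlt
      · rw [hcase hge]
    have hne2 : shiftUp L' ≠ L := by
      intro e
      have hc : L.card = L'.card := by rw [← e, card_shiftUp]
      have hLL' : L = L' := hcase (le_of_eq hc)
      rw [hLL'] at e
      exact shiftUp_ne (nonempty_iff_ne_empty.2 hL'ne) e
    have hs := step hh hLne hne2
      (by rw [card_shiftUp]; exact card_pos.2 (nonempty_iff_ne_empty.2 hL'ne))
      (by rw [card_shiftUp]; exact hle)
    rw [shiftDown_shiftUp] at hs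
    have r1 : L ∩ shiftUp L' = shiftUp (L' ∩ shiftDown L) := by
      rw [inter_comm, shiftUp_inter]
    rw [r1, shift_inv hh, inter_comm L L'] at hs
    have hfin : min (h (L' ∩ shiftDown L)) (h (L' ∩ L)) ≤ s - 1 :=
      le_trans hs (Nat.sub_le_sub_right hL 1)
    rcases min_le_iff.1 hfin with hc | hc
    · right; exact hc
    · left; exact hc
end

section
/- Let n > k > 2t with k - t prime, and let B be a family of k-element subsets of an n-element set such that no two members of B intersect in exactly t elements. Then |B| ≤ C(n, k-t-1). -/
/-!
Let `p = k - t`. Over `ZMod p` the functions `f B S = 1 - (|S ∩ B| - k) ^ (p - 1)` are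
multilinear polynomials of degree `≤ p - 1` in the indicator variables of `S`, and by Fermat
`f B B' = [B = B']` on `𝓑`, because `2t < k` and `|B ∩ B'| ≠ t` force `|B ∩ B'| ≢ k (mod p)`.
Following Alon–Babai–Suzuki, the `f B` stay linearly independent together with the products
`x_I (|S| - k)`, `|I| ≤ p - 2`, which vanish on `k`-sets; these are independent since a
polynomial of degree `≤ p - 2` vanishing on all sets of size `≢ k (mod p)` is zero. All of them
lie in the space of polynomials of degree `≤ p - 1`, whose dimension is at most
`∑_{i ≤ p - 1} C(n, i)`; subtracting the `∑_{i ≤ p - 2} C(n, i)` products leaves `C(n, p - 1)`.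
-/

open Finset

namespace FranklWilson

section CommRing

variable {K α : Type*} [CommRing K] [DecidableEq α]

variable (K) in
/-- Functions on `Finset α` are functions on the cube `{0,1}^α`; `monomial K I` is the
multilinear monomial `∏ i ∈ I, x i`. -/
def monomial (I : Finset α) : Finset α → K :=
  fun S => if I ⊆ S then 1 else 0

lemma monomial_mul (I J : Finset α) : monomial K I * monomial K J = monomial K (I ∪ J) := by
  funext S
  by_cases hI : I ⊆ S <;> by_cases hJ : J ⊆ S <;> simp [monomial, union_subset_iff, hI, hJ]

lemma monomial_empty : monomial K (∅ : Finset α) = 1 := by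
  funext S
  simp [monomial]

variable (K α) in
def degreeLE (d : ℕ) : Submodule K (Finset α → K) :=
  Submodule.span K (monomial K '' {I | I.card ≤ d})

lemma monomial_mem_degreeLE {I : Finset α} {d : ℕ} (h : I.card ≤ d) :
    monomial K I ∈ degreeLE K α d :=
  Submodule.subset_span ⟨I, h, rfl⟩

lemma one_mem_degreeLE (d : ℕ) : (1 : Finset α → K) ∈ degreeLE K α d :=
  monomial_empty (α := α) (K := K) ▸ monomial_mem_degreeLE (by simp)

lemma mul_mem_degreeLE {u v : Finset α → K} {a b : ℕ} (hu : u ∈ degreeLE K α a)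
    (hv : v ∈ degreeLE K α b) : u * v ∈ degreeLE K α (a + b) := by
  refine (?_ : degreeLE K α a * degreeLE K α b ≤ _) (Submodule.mul_mem_mul hu hv)
  rw [degreeLE, degreeLE, Submodule.span_mul_span, Submodule.span_le]
  rintro _ ⟨_, ⟨I, hI, rfl⟩, _, ⟨J, hJ, rfl⟩, rfl⟩
  simp only [SetLike.mem_coe, monomial_mul]
  exact monomial_mem_degreeLE ((card_union_le I J).trans (Nat.add_le_add hI hJ))

lemma pow_mem_degreeLE {u : Finset α → K} {d : ℕ} (hu : u ∈ degreeLE K α d) (m : ℕ) :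
    u ^ m ∈ degreeLE K α (m * d) := by
  induction m with
  | zero => simpa using one_mem_degreeLE 0
  | succ m ih => simpa [pow_succ, add_mul] using mul_mem_degreeLE ih hu

lemma card_inter_sub_mem_degreeLE (B : Finset α) (c : K) :
    (fun S => ((S ∩ B).card : K) - c) ∈ degreeLE K α 1 := by
  have hcard : (fun S => ((S ∩ B).card : K)) = ∑ i ∈ B, monomial K {i} := by
    funext S
    simp [monomial, Finset.sum_apply, inter_comm]
  have hc : (fun _ => c : Finset α → K) = c • 1 := by
    funext S
    simp
  refine Submodule.sub_mem _ ?_ (hc ▸ Submodule.smul_mem _ c (one_mem_degreeLE 1))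
  rw [hcard]
  exact Submodule.sum_mem _ fun i _ => monomial_mem_degreeLE (by simp)

lemma sum_powerset_neg_one_pow_mul_monomial {I U : Finset α} (hUI : ¬U ⊆ I) (X : Finset α) :
    ∑ T ∈ U.powerset, (-1 : K) ^ T.card * monomial K I (X ∪ T) = 0 := by
  obtain ⟨a, haU, haI⟩ := not_subset.1 hUI
  rw [← insert_erase haU, sum_powerset_insert (notMem_erase a U), ← sum_add_distrib]
  refine sum_eq_zero fun T hT => ?_
  have haT : a ∉ T := fun h => notMem_erase a U (mem_powerset.1 hT h)
  simp only [monomial, union_insert, subset_insert_iff_of_notMem haI,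
    card_insert_of_notMem haT, pow_succ]
  split_ifs <;> ring

lemma sum_powerset_neg_one_pow_mul_eq_zero {Q : Finset α → K} {d : ℕ} (hQ : Q ∈ degreeLE K α d)
    {U : Finset α} (hU : d < U.card) (X : Finset α) :
    ∑ T ∈ U.powerset, (-1 : K) ^ T.card * Q (X ∪ T) = 0 := by
  induction hQ using Submodule.span_induction with
  | mem _ h =>
    obtain ⟨I, hI, rfl⟩ := h
    exact sum_powerset_neg_one_pow_mul_monomial
      (fun hUI => (card_le_card hUI).not_gt (hI.trans_lt hU)) X
  | zero => simp
  | add u v _ _ hu hv => simp [mul_add, sum_add_distrib, hu, hv]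
  | smul c u _ hu => simp [mul_left_comm _ c, ← mul_sum, hu]

lemma apply_eq_zero_of_forall_ne {Q : Finset α → K} {d : ℕ} (hQ : Q ∈ degreeLE K α d)
    {U T₀ : Finset α} (hU : d < U.card) (hT₀ : T₀ ⊆ U) (X : Finset α)
    (h : ∀ T ⊆ U, T ≠ T₀ → Q (X ∪ T) = 0) : Q (X ∪ T₀) = 0 := by
  have hsum := sum_powerset_neg_one_pow_mul_eq_zero hQ hU X
  rw [sum_eq_single_of_mem T₀ (mem_powerset.2 hT₀)
    fun T hT hne => by rw [h T (mem_powerset.1 hT) hne, mul_zero]] at hsum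
  exact ((isUnit_neg_one.pow _).mul_right_eq_zero).1 hsum

/-- For `S` of the exceptional residue, pick a window `U` of `d + 1` elements either inside `S`
or outside it: the alternating sum over `T ⊆ U` of `Q (X ∪ T)` kills `Q`, and among the `d + 2`
consecutive sizes it visits only `S` has residue `r`. -/
theorem eq_zero_of_mem_degreeLE_of_forall_not_modEq [Fintype α] {Q : Finset α → K} {d m r : ℕ}
    (hQ : Q ∈ degreeLE K α d) (hdm : d + 1 < m) (hcard : d + 1 + r % m ≤ Fintype.card α)
    (hQ0 : ∀ S : Finset α, ¬S.card ≡ r [MOD m] → Q S = 0) : Q = 0 := by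
  funext S
  by_cases hS : S.card ≡ r [MOD m]
  swap
  · exact hQ0 S hS
  have hnear : ∀ S' : Finset α, S'.card ≠ S.card → S'.card ≤ S.card + d + 1 →
      S.card ≤ S'.card + d + 1 → Q S' = 0 := by
    refine fun S' hne h₁ h₂ => hQ0 S' fun hS' => hne ((hS'.trans hS.symm).eq_of_abs_lt ?_)
    rw [abs_lt]
    constructor <;> omega
  rcases le_or_gt (d + 1) S.card with hlarge | hsmall
  · obtain ⟨U, hUS, hUcard⟩ := exists_subset_card_eq hlarge
    have := apply_eq_zero_of_forall_ne hQ (by omega) (subset_refl U) (S \ U) fun T hTU hTne => by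
      have hT : T.card < U.card := card_lt_card (ssubset_of_subset_of_ne hTU hTne)
      have hST := card_union_of_disjoint
        (disjoint_of_subset_right hTU (sdiff_disjoint : Disjoint (S \ U) U))
      have := card_sdiff_add_card_eq_card hUS
      exact hnear _ (by omega) (by omega) (by omega)
    rwa [sdiff_union_of_subset hUS] at this
  · have hSr : S.card = r % m := by
      rw [← Nat.mod_eq_of_lt (hsmall.trans hdm)]
      exact hS
    obtain ⟨U, hUS, hUcard⟩ := exists_subset_card_eq (s := Sᶜ) (n := d + 1)
      (by rw [card_compl]; omega)
    have := apply_eq_zero_of_forall_ne hQ (by omega) (empty_subset U) S fun T hTU hTne => by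
      have hT : T.card ≤ U.card := card_le_card hTU
      have hT₀ : 0 < T.card := card_pos.2 (nonempty_iff_ne_empty.2 hTne)
      have hST := card_union_of_disjoint
        (disjoint_of_subset_right (hTU.trans hUS) disjoint_compl_right)
      exact hnear _ (by omega) (by omega) (by omega)
    simpa using this

theorem linearIndependent_monomial :
    LinearIndependent K (monomial K : Finset α → Finset α → K) := by
  rw [linearIndependent_iff']
  intro s c hc I
  induction I using Finset.strongInduction with
  | H I ih =>
    intro hI
    -- evaluating at `I` only sees the coefficients of subsets of `I`
    have hcI := congrFun hc I
    simp only [Finset.sum_apply, Pi.smul_apply, smul_eq_mul, Pi.zero_apply] at hcI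
    rw [sum_eq_single_of_mem I hI fun J hJ hJI => ?_] at hcI
    · simpa [monomial] using hcI
    by_cases hJI' : J ⊆ I
    · rw [ih J (ssubset_of_subset_of_ne hJI' hJI) hJ, zero_mul]
    · simp [monomial, hJI']

end CommRing

section Field

variable {K α : Type*} [Field K] [DecidableEq α] [Fintype α]

lemma finrank_degreeLE_le (d : ℕ) :
    Module.finrank K (degreeLE K α d) ≤ #{I : Finset α | I.card ≤ d} := by
  rw [degreeLE, Set.image_eq_range, ← Fintype.card_subtype]
  exact finrank_range_le_card _

lemma card_filter_card_le_succ (d : ℕ) :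
    #{I : Finset α | I.card ≤ d + 1} =
      #{I : Finset α | I.card ≤ d} + (Fintype.card α).choose (d + 1) := by
  rw [← card_univ, ← card_powersetCard, powersetCard_eq_filter, powerset_univ,
    ← card_union_of_disjoint (disjoint_filter.2 fun I _ h => by omega), ← filter_or]
  congr 1
  ext I
  simp only [mem_filter, mem_univ, true_and]
  omega

variable {𝓑 : Finset (Finset α)} {d : ℕ} {f : Finset α → Finset α → K} {L : Finset α → K}

lemma linearIndependent_separating (hfB : ∀ B ∈ 𝓑, f B B ≠ 0)
    (hfB' : ∀ B ∈ 𝓑, ∀ B' ∈ 𝓑, B ≠ B' → f B B' = 0) (hL𝓑 : ∀ B ∈ 𝓑, L B = 0)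
    (hLinj : ∀ Q ∈ degreeLE K α d, Q * L = 0 → Q = 0) :
    LinearIndependent K (Sum.elim (fun B : 𝓑 => f B)
      fun I : {I : Finset α // I.card ≤ d} => monomial K I.1 * L) := by
  rw [Fintype.linearIndependent_iff]
  intro c hc
  set Q : Finset α → K := ∑ I : {I : Finset α // I.card ≤ d}, c (.inr I) • monomial K I.1
  have hsum : ∑ B : 𝓑, c (.inl B) • f B + Q * L = 0 := by
    simpa [Fintype.sum_sum_type, Q, sum_mul] using hc
  have hc𝓑 : ∀ B : 𝓑, c (.inl B) = 0 := by
    intro B₀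
    have h := congrFun hsum B₀
    simp only [Pi.add_apply, Finset.sum_apply, Pi.smul_apply, Pi.mul_apply, hL𝓑 B₀ B₀.2,
      mul_zero, add_zero, Pi.zero_apply, smul_eq_mul] at h
    rwa [Fintype.sum_eq_single B₀ fun B hB => by
        rw [hfB' B B.2 B₀ B₀.2 (Subtype.coe_injective.ne hB), mul_zero],
      mul_eq_zero, or_iff_left (hfB B₀ B₀.2)] at h
  have hQ : Q = 0 := by
    refine hLinj Q (Submodule.sum_mem _ fun I _ =>
      Submodule.smul_mem _ _ (monomial_mem_degreeLE I.2)) ?_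
    simpa [hc𝓑] using hsum
  have hcI := Fintype.linearIndependent_iff.1
    ((linearIndependent_monomial (K := K)).comp _ Subtype.val_injective) (fun I => c (.inr I)) hQ
  rintro (B | I)
  exacts [hc𝓑 B, hcI I]

theorem card_le_choose_of_separating (hf : ∀ B ∈ 𝓑, f B ∈ degreeLE K α (d + 1))
    (hfB : ∀ B ∈ 𝓑, f B B ≠ 0) (hfB' : ∀ B ∈ 𝓑, ∀ B' ∈ 𝓑, B ≠ B' → f B B' = 0)
    (hL : L ∈ degreeLE K α 1) (hL𝓑 : ∀ B ∈ 𝓑, L B = 0)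
    (hLinj : ∀ Q ∈ degreeLE K α d, Q * L = 0 → Q = 0) :
    𝓑.card ≤ (Fintype.card α).choose (d + 1) := by
  let v := Sum.elim (fun B : 𝓑 => f B) fun I : {I : Finset α // I.card ≤ d} => monomial K I.1 * L
  have hspan : Submodule.span K (Set.range v) ≤ degreeLE K α (d + 1) := by
    rw [Submodule.span_le]
    rintro _ ⟨B | I, rfl⟩
    · exact hf B B.2
    · exact mul_mem_degreeLE (monomial_mem_degreeLE I.2) hL
  have := calc
    𝓑.card + #{I : Finset α | I.card ≤ d} = Module.finrank K (Submodule.span K (Set.range v)) := by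
      rw [finrank_span_eq_card (linearIndependent_separating hfB hfB' hL𝓑 hLinj),
        Fintype.card_sum, Fintype.card_coe, Fintype.card_subtype]
    _ ≤ Module.finrank K (degreeLE K α (d + 1)) := Submodule.finrank_mono hspan
    _ ≤ #{I : Finset α | I.card ≤ d} + (Fintype.card α).choose (d + 1) :=
      card_filter_card_le_succ (α := α) d ▸ finrank_degreeLE_le (d + 1)
  omega

theorem card_le_choose_of_card_inter_not_modEq {p k : ℕ} (hp : p.Prime)
    {𝓑 : Finset (Finset α)} (hk : ∀ B ∈ 𝓑, B.card = k)
    (h𝓑 : ∀ B ∈ 𝓑, ∀ B' ∈ 𝓑, B ≠ B' → ¬(B ∩ B').card ≡ k [MOD p])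
    (hcard : p - 1 + k % p ≤ Fintype.card α) :
    𝓑.card ≤ (Fintype.card α).choose (p - 1) := by
  have : Fact p.Prime := ⟨hp⟩
  obtain ⟨d, rfl⟩ : ∃ d, p = d + 2 := ⟨p - 2, by have := hp.two_le; omega⟩
  let f (B S : Finset α) : ZMod (d + 2) := 1 - (((S ∩ B).card : ZMod (d + 2)) - k) ^ (d + 1)
  let L (S : Finset α) : ZMod (d + 2) := S.card - k
  refine card_le_choose_of_separating (f := f) (L := L) (fun B _ => ?_) (fun B hB => ?_)
    (fun B hB B' hB' hne => ?_) ?_ (fun B hB => by simp [L, hk B hB]) fun Q hQ hQL => ?_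
  · refine Submodule.sub_mem _ (one_mem_degreeLE _) ?_
    have := pow_mem_degreeLE (card_inter_sub_mem_degreeLE B (k : ZMod (d + 2))) (d + 1)
    rwa [mul_one] at this
  · simp [f, hk B hB]
  · have hB'B := h𝓑 B' hB' B hB hne.symm
    rw [← ZMod.natCast_eq_natCast_iff, ← sub_eq_zero] at hB'B
    exact sub_eq_zero.2 (ZMod.pow_card_sub_one_eq_one hB'B).symm
  · simpa [L] using card_inter_sub_mem_degreeLE (K := ZMod (d + 2)) (univ : Finset α) k
  · refine eq_zero_of_mem_degreeLE_of_forall_not_modEq hQ (m := d + 2) (r := k) (by omega) hcard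
      fun S hS => ?_
    have hLS : L S ≠ 0 := by
      simpa [L, sub_eq_zero, ZMod.natCast_eq_natCast_iff] using hS
    simpa [hLS] using congrFun hQL S

end Field

lemma mod_sub_eq_of_two_mul_lt {k t : ℕ} (h : 2 * t < k) : k % (k - t) = t := by
  rw [show k = t + (k - t) by omega, Nat.add_sub_cancel_left, Nat.add_mod_right,
    Nat.mod_eq_of_lt (by omega)]

lemma card_inter_not_modEq {α : Type*} [DecidableEq α] {B B' : Finset α} {k t : ℕ}
    (hB : B.card = k) (hB' : B'.card = k) (hne : B ≠ B') (ht : (B ∩ B').card ≠ t)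
    (htk : 2 * t < k) : ¬(B ∩ B').card ≡ k [MOD k - t] := by
  have hlt : (B ∩ B').card < k := by
    refine hB ▸ card_lt_card (ssubset_of_subset_of_ne inter_subset_left fun h => hne ?_)
    exact eq_of_subset_of_card_le (h ▸ inter_subset_right) (by rw [hB, hB'])
  have hkt : k ≡ t [MOD k - t] :=
    (mod_sub_eq_of_two_mul_lt htk).trans (Nat.mod_eq_of_lt (by omega)).symm
  refine fun h => ht ((h.trans hkt).eq_of_abs_lt ?_)
  rw [abs_lt]
  constructor <;> omega

end FranklWilson

open FranklWilson

/-- The prime case of the Frankl–Wilson theorem (Theorem 3.1 of Mubayi–Rödl):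
if `n > k > 2t`, `k - t` is prime, and `𝓑` is a family of `k`-element subsets of an
`n`-element set no two members of which intersect in exactly `t` elements, then
`|𝓑| ≤ C(n, k-t-1)`. -/
theorem stmt_16 {α : Type*} [DecidableEq α] [Fintype α] (n k t : ℕ)
    (hn : Fintype.card α = n) (hnk : k < n) (hkt : 2 * t < k) (hp : (k - t).Prime)
    (𝓑 : Finset (Finset α)) (hk : ∀ B ∈ 𝓑, B.card = k)
    (homit : ∀ B ∈ 𝓑, ∀ B' ∈ 𝓑, (B ∩ B').card ≠ t) :
    𝓑.card ≤ n.choose (k - t - 1) := by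
  subst hn
  refine card_le_choose_of_card_inter_not_modEq hp hk
    (fun B hB B' hB' hne => card_inter_not_modEq (hk B hB) (hk B' hB') hne (homit B hB B' hB') hkt)
    ?_
  rw [mod_sub_eq_of_two_mul_lt hkt]
  omega
end

section
/- If k - t = p is a prime with k > 2t ≥ 0 and t ≥ 1, then gcd(C(k-1, k-t-1), C(k-2, k-t-1), ..., C(k-t, k-t-1)) > 1; in fact p divides each of C(k-j, k-t-1) for 1 ≤ j ≤ t. -/
open Finset

/-- If `k - t = p` is prime with `k > 2t` and `t ≥ 1`, then
`gcd(C(k-1,k-t-1), …, C(k-t,k-t-1)) > 1`; in fact `p` divides each `C(k-j, k-t-1)`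
for `1 ≤ j ≤ t`. -/
theorem stmt_17 (k t p : ℕ) (ht : 1 ≤ t) (hkt : 2 * t < k) (hp : p = k - t)
    (hprime : p.Prime) :
    (∀ j ∈ Finset.Icc 1 t, p ∣ (k - j).choose (k - t - 1)) ∧
      1 < (Finset.Icc 1 t).gcd fun j => (k - j).choose (k - t - 1) := by
  have htk : t < k := by omega
  have htp : t < p := by omega
  have hdvd : ∀ j ∈ Finset.Icc 1 t, p ∣ (k - j).choose (k - t - 1) := by
    intro j hj
    simp only [Finset.mem_Icc] at hj
    refine hprime.dvd_choose (by omega) (by omega) (by omega)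
  refine ⟨hdvd, ?_⟩
  have hg : p ∣ (Finset.Icc 1 t).gcd fun j => (k - j).choose (k - t - 1) :=
    Finset.dvd_gcd hdvd
  have hne : (Finset.Icc 1 t).gcd (fun j => (k - j).choose (k - t - 1)) ≠ 0 := by
    intro h0
    rw [Finset.gcd_eq_zero_iff] at h0
    have := h0 1 (by simp [ht])
    have hpos : 0 < (k - 1).choose (k - t - 1) := Nat.choose_pos (by omega)
    omega
  have := Nat.le_of_dvd (Nat.pos_of_ne_zero hne) hg
  have := hprime.two_le
  omega
end
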